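/- arXiv:1204.3581 — 3 statements merged into one kernel-verified Lean document; each statement's English description precedes it below -/
import Mathlib

section
/- Let σ ≥ 1 and let n₁, …, n_σ be positive integers with n = n₁ + ⋯ + n_σ. Then ∑_{i=1}^{σ} n_i · log₂(n / n_i) ≥ (σ − 1) · log₂ n. (Equivalently: if S is a sequence of length n over an alphabet of cardinality σ in which every symbol occurs at least once, then n·H₀(S) ≥ (σ − 1)·log₂ n.) -/
open Real in
lemma chord_ineq {N x : ℝ} (hN : 2 ≤ N) (hx1 : 1 ≤ x) (hxN : x ≤ N) :
    (N - x) / (N - 1) * Real.log N ≤ x * Real.log (N / x) := by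
  have hN1 : (0:ℝ) < N - 1 := by linarith
  have hg : ConcaveOn ℝ (Set.Ici (0:ℝ)) (fun t => Real.log N • id t + negMulLog t) :=
    ((concaveOn_id (convex_Ici 0)).smul (Real.log_nonneg (by linarith))).add
      concaveOn_negMulLog
  set a : ℝ := (N - x) / (N - 1) with ha
  set b : ℝ := (x - 1) / (N - 1) with hb
  have hab : a + b = 1 := by
    rw [ha, hb, ← add_div, div_eq_one_iff_eq hN1.ne']; ring
  have h1 : (1:ℝ) ∈ Set.Ici (0:ℝ) := by norm_num
  have h2 : N ∈ Set.Ici (0:ℝ) := Set.mem_Ici.2 (by linarith)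
  have haa : 0 ≤ a := div_nonneg (by linarith) (by linarith)
  have hbb : 0 ≤ b := div_nonneg (by linarith) (by linarith)
  have key := hg.2 h1 h2 haa hbb hab
  have hcomb : a • (1:ℝ) + b • N = x := by
    rw [ha, hb, smul_eq_mul, smul_eq_mul, div_mul_eq_mul_div, div_mul_eq_mul_div, ← add_div,
      div_eq_iff hN1.ne']; ring
  rw [hcomb] at key
  simp only [smul_eq_mul, id] at key
  have hx0 : (0:ℝ) < x := by linarith
  have hNx : Real.log (N / x) = Real.log N - Real.log x :=
    Real.log_div (by linarith) (ne_of_gt hx0)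
  have e1 : Real.negMulLog 1 = 0 := Real.negMulLog_one
  have e2 : Real.negMulLog N = -N * Real.log N := rfl
  have e3 : Real.negMulLog x = -x * Real.log x := rfl
  rw [e1, e2, e3] at key
  nlinarith [key]

/-- If `σ ≥ 1` and `n₁, …, n_σ` are positive integers summing to `n`, then
`∑ i, n_i · log₂(n / n_i) ≥ (σ − 1) · log₂ n`. -/
theorem stmt_0 (σ : ℕ) (hσ : 1 ≤ σ) (f : Fin σ → ℕ) (hf : ∀ i, 0 < f i)
    (n : ℕ) (hn : n = ∑ i, f i) :
    ((σ : ℝ) - 1) * Real.logb 2 n ≤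
      ∑ i, (f i : ℝ) * Real.logb 2 ((n : ℝ) / (f i : ℝ)) := by
  have hσn : σ ≤ n := by
    rw [hn]
    calc σ = ∑ _i : Fin σ, 1 := by simp
    _ ≤ ∑ i, f i := Finset.sum_le_sum fun i _ => hf i
  have hn1 : 1 ≤ n := le_trans hσ hσn
  rcases eq_or_lt_of_le hn1 with h1 | h2
  · -- n = 1, hence σ = 1
    have hσ1 : σ = 1 := le_antisymm (h1 ▸ hσn) hσ
    have hlog : Real.logb 2 (n:ℝ) = 0 := by rw [← h1]; simp
    have hterm : ∀ i, (f i : ℝ) * Real.logb 2 ((n : ℝ) / (f i : ℝ)) = 0 := by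
      intro i
      have hfi : f i = 1 := by
        have h3 : f i ≤ n := by
          rw [hn]; exact Finset.single_le_sum (fun j _ => Nat.zero_le _) (Finset.mem_univ i)
        have h4 := hf i
        omega
      rw [hfi, ← h1]; simp
    rw [hlog, Finset.sum_congr rfl (fun i _ => hterm i), Finset.sum_const, hσ1]
    simp
  · -- n ≥ 2
    have hN2 : (2:ℝ) ≤ (n:ℝ) := by exact_mod_cast h2
    have hN1 : (0:ℝ) < (n:ℝ) - 1 := by linarith
    have hlog2 : (0:ℝ) < Real.log 2 := Real.log_pos (by norm_num)
    have hlogn : 0 ≤ Real.log n := Real.log_nonneg (by linarith)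
    -- reduce logb to log
    simp only [Real.logb, div_eq_mul_inv, ← mul_assoc, ← Finset.sum_mul]
    apply mul_le_mul_of_nonneg_right _ (by positivity)
    -- main inequality with natural log
    have step1 : ∀ i, ((n:ℝ) - (f i : ℝ)) / ((n:ℝ) - 1) * Real.log n ≤
        (f i : ℝ) * Real.log ((n:ℝ) / (f i : ℝ)) := by
      intro i
      refine chord_ineq hN2 ?_ ?_
      · exact_mod_cast hf i
      · have : f i ≤ n := by
          rw [hn]; exact Finset.single_le_sum (fun j _ => Nat.zero_le _) (Finset.mem_univ i)
        exact_mod_cast this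
    have hsum : ∑ i, ((n:ℝ) - (f i : ℝ)) / ((n:ℝ) - 1) * Real.log n =
        (n:ℝ) * ((σ:ℝ) - 1) / ((n:ℝ) - 1) * Real.log n := by
      rw [← Finset.sum_mul, ← Finset.sum_div]
      congr 2
      have : ∑ i, ((n:ℝ) - (f i : ℝ)) = σ * n - n := by
        rw [Finset.sum_sub_distrib, Finset.sum_const]
        have : ((n:ℕ):ℝ) = ∑ i, ((f i : ℕ) : ℝ) := by
          rw [hn]; push_cast; ring
        rw [← this]
        simp only [Finset.card_univ, Fintype.card_fin, nsmul_eq_mul]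
      rw [this]; ring
    have hfinal : ((σ:ℝ) - 1) * Real.log n ≤ (n:ℝ) * ((σ:ℝ) - 1) / ((n:ℝ) - 1) * Real.log n := by
      apply mul_le_mul_of_nonneg_right _ hlogn
      rw [le_div_iff₀ hN1]
      nlinarith [show (1:ℝ) ≤ (σ:ℝ) by exact_mod_cast hσ]
    calc ((σ:ℝ) - 1) * Real.log n ≤ (n:ℝ) * ((σ:ℝ) - 1) / ((n:ℝ) - 1) * Real.log n := hfinal
    _ = ∑ i, ((n:ℝ) - (f i : ℝ)) / ((n:ℝ) - 1) * Real.log n := hsum.symm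
    _ ≤ ∑ i, (f i : ℝ) * Real.log ((n:ℝ) / (f i : ℝ)) :=
        Finset.sum_le_sum fun i _ => step1 i
end

section
/- Let σ ≥ 1 and let n₁, …, n_σ be positive integers with n = n₁ + ⋯ + n_σ. Then ∑_{i=1}^{σ} n_i · log₂(n / n_i) ≥ (σ − 1)·log₂ n + (n − σ + 1)·log₂(n / (n − σ + 1)); that is, among all tuples of σ positive integer counts summing to n, the quantity ∑ n_i·log₂(n/n_i) is minimized when σ − 1 of the counts equal 1 and one count equals n − σ + 1. -/
open Real

lemma key_merge {a b : ℝ} (ha : 1 ≤ a) (hb : 1 ≤ b) :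
    a * Real.log a + b * Real.log b ≤ (a + b - 1) * Real.log (a + b - 1) := by
  rcases eq_or_lt_of_le ha with h1 | h1
  · rw [← h1]; simp
  · set s := a + b - 1 with hs
    have hd : 0 < a + b - 2 := by linarith
    set t : ℝ := (a - 1) / (a + b - 2) with ht
    have ht0 : 0 ≤ t := div_nonneg (by linarith) hd.le
    have ht1 : 0 ≤ 1 - t := by
      rw [ht, sub_nonneg, div_le_one hd]; linarith
    have hsum : (1 - t) + t = 1 := by ring
    have h1mem : (1:ℝ) ∈ Set.Ici (0:ℝ) := by norm_num
    have hsmem : s ∈ Set.Ici (0:ℝ) := by simp [hs]; linarith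
    have hca := Real.convexOn_mul_log.2 h1mem hsmem ht1 ht0 hsum
    have hcb := Real.convexOn_mul_log.2 h1mem hsmem ht0 ht1 (by ring)
    have hta : (1 - t) • (1:ℝ) + t • s = a := by
      have htt : t * (a + b - 2) = a - 1 := by rw [ht]; exact div_mul_cancel₀ (a - 1) hd.ne'
      simp only [smul_eq_mul]; linear_combination htt + t * hs
    have htb : t • (1:ℝ) + (1 - t) • s = b := by
      have htt : t * (a + b - 2) = a - 1 := by rw [ht]; exact div_mul_cancel₀ (a - 1) hd.ne'
      simp only [smul_eq_mul]; linear_combination (-1) * htt + (1 - t) * hs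
    rw [hta] at hca
    rw [htb] at hcb
    simp only [smul_eq_mul, Real.log_one, mul_one, mul_zero, zero_add, add_zero] at hca hcb
    calc a * Real.log a + b * Real.log b
        ≤ t * (s * Real.log s) + (1 - t) * (s * Real.log s) := by linarith
      _ = s * Real.log s := by ring

lemma sum_mul_log_le (σ : ℕ) (f : Fin σ → ℕ) (hf : ∀ i, 0 < f i) :
    ∑ i, (f i : ℝ) * Real.log (f i) ≤
      ((∑ i, f i : ℕ) - (σ : ℝ) + 1) * Real.log ((∑ i, f i : ℕ) - (σ : ℝ) + 1) := by
  induction σ with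
  | zero => simp
  | succ m ih =>
    have ihs := ih (fun i => f i.succ) (fun i => hf i.succ)
    simp only [Fin.sum_univ_succ]
    set S : ℕ := ∑ i : Fin m, f i.succ with hS
    have hSm : (m : ℝ) ≤ (S : ℝ) := by
      rw [hS]; push_cast
      calc (m : ℝ) = ∑ _i : Fin m, (1:ℝ) := by simp
        _ ≤ ∑ i : Fin m, ((f i.succ : ℝ)) := by
            apply Finset.sum_le_sum; intro i _
            exact_mod_cast hf i.succ
    have ha : (1:ℝ) ≤ (f 0 : ℝ) := by exact_mod_cast hf 0
    have hb : (1:ℝ) ≤ (S : ℝ) - m + 1 := by linarith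
    have hm := key_merge ha hb
    have hcast : ((f 0 + S : ℕ) : ℝ) - ((m+1 : ℕ) : ℝ) + 1 = (f 0 : ℝ) + ((S:ℝ) - m + 1) - 1 := by
      push_cast; ring
    simp only [hS] at ihs ⊢
    calc (f 0 : ℝ) * Real.log (f 0) + ∑ i : Fin m, (f i.succ : ℝ) * Real.log (f i.succ)
        ≤ (f 0 : ℝ) * Real.log (f 0) + ((S:ℝ) - m + 1) * Real.log ((S:ℝ) - m + 1) := by
          have := ihs
          push_cast at this ⊢
          linarith
      _ ≤ ((f 0 : ℝ) + ((S:ℝ) - m + 1) - 1) * Real.log ((f 0 : ℝ) + ((S:ℝ) - m + 1) - 1) := hm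
      _ = _ := by rw [hcast]

/-- If `σ ≥ 1` and `n₁, …, n_σ` are positive integers summing to `n`, then
`∑ i, n_i · log₂(n / n_i) ≥ (σ − 1)·log₂ n + (n − σ + 1)·log₂(n / (n − σ + 1))`:
the minimum is attained when `σ − 1` counts equal `1` and one count equals `n − σ + 1`. -/
theorem stmt_1 (σ : ℕ) (hσ : 1 ≤ σ) (f : Fin σ → ℕ) (hf : ∀ i, 0 < f i)
    (n : ℕ) (hn : n = ∑ i, f i) :
    ((σ : ℝ) - 1) * Real.logb 2 n +
      ((n : ℝ) - (σ : ℝ) + 1) * Real.logb 2 ((n : ℝ) / ((n : ℝ) - (σ : ℝ) + 1)) ≤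
      ∑ i, (f i : ℝ) * Real.logb 2 ((n : ℝ) / (f i : ℝ)) := by
  have hσn : (σ : ℝ) ≤ (n : ℝ) := by
    rw [hn]; push_cast
    calc (σ : ℝ) = ∑ _i : Fin σ, (1:ℝ) := by simp
      _ ≤ _ := by
          apply Finset.sum_le_sum; intro i _; exact_mod_cast hf i
  have hn1 : (1:ℝ) ≤ (n:ℝ) := le_trans (by exact_mod_cast hσ) hσn
  have hn0 : (n:ℝ) ≠ 0 := by linarith
  have hM : (1:ℝ) ≤ (n:ℝ) - σ + 1 := by linarith
  have hM0 : (n:ℝ) - σ + 1 ≠ 0 := by linarith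
  have hlog2 : 0 < Real.log 2 := Real.log_pos (by norm_num)
  have hkey : ∑ i, (f i : ℝ) * Real.log (f i) ≤
      ((n:ℝ) - σ + 1) * Real.log ((n:ℝ) - σ + 1) := by
    have := sum_mul_log_le σ f hf
    rw [← hn] at this
    exact this
  have hsum : ∑ i, (f i : ℝ) = (n : ℝ) := by rw [hn]; push_cast; ring
  simp only [Real.logb]
  have hterm : ∀ i, (f i : ℝ) * (Real.log ((n:ℝ)/(f i : ℝ)) / Real.log 2)
      = ((f i:ℝ) * Real.log n - (f i:ℝ) * Real.log (f i)) / Real.log 2 := by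
    intro i
    have hfi : (f i : ℝ) ≠ 0 := by exact_mod_cast (hf i).ne'
    rw [Real.log_div hn0 hfi]; ring
  rw [Finset.sum_congr rfl (fun i _ => hterm i), ← Finset.sum_div,
    Real.log_div hn0 hM0, Finset.sum_sub_distrib, ← Finset.sum_mul, hsum]
  have expand : ((σ:ℝ) - 1) * (Real.log n / Real.log 2) +
      ((n:ℝ) - σ + 1) * ((Real.log n - Real.log ((n:ℝ) - σ + 1)) / Real.log 2) =
      ((n:ℝ) * Real.log n - ((n:ℝ) - σ + 1) * Real.log ((n:ℝ) - σ + 1)) / Real.log 2 := by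
    field_simp; ring
  rw [expand]
  gcongr
end

section
/- Let σ ≥ 2 and let n₁, …, n_σ be positive integers with n = n₁ + ⋯ + n_σ. Then ∑_{i=1}^{σ} n_i · log₂(n / n_i) ≥ (σ/2) · log₂ n; equivalently, σ / (n·H₀(S)) ≤ 2 / log₂ n for any sequence S of length n whose alphabet has σ ≥ 2 symbols, all occurring at least once. -/
open Finset Real

private lemma key_term (n a : ℕ) (ha : 1 ≤ a) (h2a : 2 * a ≤ n) :
    Real.logb 2 n ≤ (a : ℝ) * Real.logb 2 ((n : ℝ) / (a : ℝ)) := by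
  have hapos : (0:ℝ) < a := by exact_mod_cast ha
  have hnpos : (0:ℝ) < n := by
    have : 2 ≤ n := le_trans (by omega) h2a
    exact_mod_cast Nat.lt_of_lt_of_le (by norm_num) this
  rw [Real.logb_div hnpos.ne' hapos.ne']
  rcases eq_or_lt_of_le ha with h1 | h2
  · simp [← h1]
  · -- a ≥ 2
    have ha2 : 2 ≤ a := h2
    have haR : (2:ℝ) ≤ a := by exact_mod_cast ha2
    -- log₂ a ≤ a - 1
    have hpow : a ≤ 2 ^ (a - 1) := by
      have := Nat.lt_two_pow_self (n := a - 1)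
      omega
    have hlogA : Real.logb 2 a ≤ (a : ℝ) - 1 := by
      have : (a : ℝ) ≤ (2:ℝ) ^ (a - 1) := by exact_mod_cast hpow
      have h1 : Real.logb 2 a ≤ Real.logb 2 ((2:ℝ) ^ (a - 1)) :=
        Real.logb_le_logb_of_le (by norm_num) hapos this
      rwa [Real.logb_pow, Real.logb_self_eq_one (by norm_num),
        mul_one, show ((a - 1 : ℕ) : ℝ) = (a : ℝ) - 1 by
          push_cast [Nat.cast_sub ha]; ring] at h1
    -- log₂ n ≥ 1 + log₂ a
    have hLn : 1 + Real.logb 2 a ≤ Real.logb 2 n := by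
      have h1 : (2:ℝ) * a ≤ n := by exact_mod_cast h2a
      have h2' : Real.logb 2 ((2:ℝ) * a) ≤ Real.logb 2 n :=
        Real.logb_le_logb_of_le (by norm_num) (by positivity) h1
      rwa [Real.logb_mul (by norm_num) hapos.ne',
        Real.logb_self_eq_one (by norm_num)] at h2'
    have hx : 0 ≤ Real.logb 2 a := Real.logb_nonneg (by norm_num) (by exact_mod_cast ha)
    nlinarith [mul_le_mul_of_nonneg_left hLn (by linarith : (0:ℝ) ≤ (a:ℝ) - 1)]

/-- If `σ ≥ 2` and `n₁, …, n_σ` are positive integers summing to `n`, then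
`∑ i, n_i · log₂(n / n_i) ≥ (σ/2) · log₂ n`. -/
theorem stmt_3 (σ : ℕ) (hσ : 2 ≤ σ) (f : Fin σ → ℕ) (hf : ∀ i, 0 < f i)
    (n : ℕ) (hn : n = ∑ i, f i) :
    ((σ : ℝ) / 2) * Real.logb 2 n ≤
      ∑ i, (f i : ℝ) * Real.logb 2 ((n : ℝ) / (f i : ℝ)) := by
  have hσn : 2 ≤ n := by
    calc 2 ≤ σ := hσ
    _ = ∑ _i : Fin σ, 1 := by simp
    _ ≤ ∑ i, f i := Finset.sum_le_sum (fun i _ => hf i)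
    _ = n := hn.symm
  have hnpos : (0:ℝ) < n := by exact_mod_cast Nat.lt_of_lt_of_le (by norm_num) hσn
  have hL : 0 ≤ Real.logb 2 n :=
    Real.logb_nonneg (by norm_num) (by exact_mod_cast Nat.one_le_of_lt hσn)
  have hle : ∀ i, f i ≤ n := fun i => by
    rw [hn]; exact Finset.single_le_sum (fun j _ => Nat.zero_le _) (mem_univ i)
  have hterm0 : ∀ i, 0 ≤ (f i : ℝ) * Real.logb 2 ((n:ℝ) / (f i : ℝ)) := by
    intro i
    have hfi : (0:ℝ) < f i := by exact_mod_cast hf i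
    apply mul_nonneg hfi.le
    apply Real.logb_nonneg (by norm_num)
    rw [le_div_iff₀ hfi, one_mul]
    exact_mod_cast hle i
  set B := Finset.univ.filter (fun i => n < 2 * f i) with hB
  have hBcard : B.card ≤ 1 := by
    by_contra h
    push_neg at h
    obtain ⟨i, hi, j, hj, hij⟩ := Finset.one_lt_card.mp h
    simp only [hB, Finset.mem_filter] at hi hj
    have hsum : f i + f j ≤ n := by
      rw [hn]
      calc f i + f j = ∑ x ∈ ({i, j} : Finset (Fin σ)), f x :=
            (Finset.sum_pair hij).symm
        _ ≤ ∑ x, f x := Finset.sum_le_sum_of_subset (Finset.subset_univ _)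
    omega
  have hcompl : σ - 1 ≤ Bᶜ.card := by
    have := Finset.card_compl B
    simp only [Fintype.card_fin] at this
    omega
  calc ((σ : ℝ) / 2) * Real.logb 2 n
      ≤ ((σ : ℝ) - 1) * Real.logb 2 n := by
        apply mul_le_mul_of_nonneg_right _ hL
        have : (2:ℝ) ≤ σ := by exact_mod_cast hσ
        linarith
    _ ≤ (Bᶜ.card : ℝ) * Real.logb 2 n := by
        apply mul_le_mul_of_nonneg_right _ hL
        have : ((σ - 1 : ℕ) : ℝ) ≤ (Bᶜ.card : ℝ) := by exact_mod_cast hcompl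
        have h1 : ((σ - 1 : ℕ) : ℝ) = (σ : ℝ) - 1 := by
          push_cast [Nat.cast_sub (by omega : 1 ≤ σ)]; ring
        linarith [h1 ▸ this]
    _ = ∑ _i ∈ Bᶜ, Real.logb 2 n := by rw [Finset.sum_const, nsmul_eq_mul]
    _ ≤ ∑ i ∈ Bᶜ, (f i : ℝ) * Real.logb 2 ((n:ℝ) / (f i : ℝ)) := by
        apply Finset.sum_le_sum
        intro i hi
        simp only [hB, Finset.mem_compl, Finset.mem_filter, Finset.mem_univ,
          true_and, not_lt] at hi
        exact key_term n (f i) (hf i) hi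
    _ ≤ ∑ i, (f i : ℝ) * Real.logb 2 ((n:ℝ) / (f i : ℝ)) :=
        Finset.sum_le_sum_of_subset_of_nonneg (Finset.subset_univ _)
          (fun i _ _ => hterm0 i)
end
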